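/- The pricing formula for a foreign (k2-denominated) ZCB collateralized in currency k0 under the domestic measure, 𝒳^{k0,k2}_t B^{k2,k0}(t,T) = B^{c,k0}_t E^{ℚ^{k0}}[ 𝒳^{k0,k2}_T / B^{c,k0}_T | 𝒢_t ], transforms under the change to the foreign spot measure ℚ^{k2} with density (B^{k2}_T 𝒳^{k0,k2}_T / B^{k0}_T)·(B^{k0}_0/(B^{k2}_0 𝒳^{k0,k2}_0)) into B^{k2,k0}(t,T) = B^{c,k2,k0}_t E^{ℚ^{k2}}[ 1 / B^{c,k2,k0}_T | 𝒢_t ], where B^{c,k2,k0}_t = exp(∫_0^t (r^{c,k2}_s + q^{k2,k0}_s) ds). -/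

import Mathlib

/-!
Under the domestic measure, `Z_t = 𝒳_t B^{k2}_t / (B^{k0}_t 𝒳_0)` is the martingale density of
`ℚ^{k2}`, so Bayes' rule gives `E^{ℚ^{k2}}[Y | 𝒢_t] = E[Y Z_T | 𝒢_t] / Z_t`. For
`Y = 1 / B^{c,k2,k0}_T`, the identity `B^{c,k2,k0} = B^{k2} B^{c,k0} / B^{k0}` (which is what the
basis `q^{k2,k0}` is defined for) turns `Y Z_T` into `𝒳_T / (B^{c,k0}_T 𝒳_0)`; pulling out the
`𝒢_t`-measurable factor `𝒳_0⁻¹` and inserting the domestic pricing formula leaves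
`B^{k2,k0}(t,T) / B^{c,k2,k0}_t`.
-/

open MeasureTheory

/-- The measure with density `g` with respect to `μ` (used to define the foreign spot
risk-neutral measure). -/
noncomputable def densMeasure {Ω : Type*} {m0 : MeasurableSpace Ω}
    (μ : Measure Ω) (g : Ω → ℝ) : Measure Ω :=
  μ.withDensity fun ω => ENNReal.ofReal (g ω)

section ChangeOfMeasure

variable {Ω : Type*} {m m0 : MeasurableSpace Ω} {μ : Measure Ω} {f g : Ω → ℝ}

lemma integrable_mul_of_integrable_densMeasure (hg : AEMeasurable g μ) (hg0 : 0 ≤ᵐ[μ] g)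
    (hf : Integrable f (densMeasure μ g)) : Integrable (f * g) μ := by
  rw [densMeasure, integrable_withDensity_iff_integrable_smul₀' hg.ennreal_ofReal
    (.of_forall fun _ => ENNReal.ofReal_lt_top)] at hf
  refine hf.congr ?_
  filter_upwards [hg0] with ω hω
  simp [ENNReal.toReal_ofReal hω, mul_comm]

lemma setIntegral_densMeasure (hg : AEMeasurable g μ) (hg0 : 0 ≤ᵐ[μ] g) (f : Ω → ℝ)
    {s : Set Ω} (hs : MeasurableSet s) :
    ∫ ω in s, f ω ∂densMeasure μ g = ∫ ω in s, (f * g) ω ∂μ := by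
  rw [densMeasure, setIntegral_withDensity_eq_setIntegral_toReal_smul₀ hg.ennreal_ofReal.restrict
    (.of_forall fun _ => ENNReal.ofReal_lt_top) f hs]
  refine setIntegral_congr_ae hs ?_
  filter_upwards [hg0] with ω hω _
  simp [ENNReal.toReal_ofReal hω, mul_comm]

lemma integrable_of_ae_pos_condExp (h : ∀ᵐ ω ∂μ, 0 < (μ[f|m]) ω) : Integrable f μ := by
  by_contra hf
  rw [condExp_of_not_integrable hf] at h
  obtain rfl : μ = 0 := by simpa using h
  exact hf integrable_zero_measure

/-- Bayes' rule in multiplied-out form, which needs no positivity of `μ[g|m]`. -/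
theorem condExp_densMeasure_mul_condExp (hm : m ≤ m0) [IsFiniteMeasure μ]
    (hg : Integrable g μ) (hg0 : 0 ≤ᵐ[μ] g) (hf : Integrable f (densMeasure μ g)) :
    (densMeasure μ g)[f|m] * μ[g|m] =ᵐ[μ] μ[f * g|m] := by
  have : IsFiniteMeasure (densMeasure μ g) := isFiniteMeasure_withDensity_ofReal hg.2
  set ψ := (densMeasure μ g)[f|m]
  have hψm : StronglyMeasurable[m] ψ := stronglyMeasurable_condExp
  have hψg : Integrable (ψ * g) μ :=
    integrable_mul_of_integrable_densMeasure hg.1.aemeasurable hg0 integrable_condExp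
  have hpull : μ[ψ * g|m] =ᵐ[μ] ψ * μ[g|m] :=
    condExp_mul_of_stronglyMeasurable_left hψm hψg hg
  refine ae_eq_condExp_of_forall_setIntegral_eq hm
    (integrable_mul_of_integrable_densMeasure hg.1.aemeasurable hg0 hf)
    (fun s _ _ => (integrable_condExp.congr hpull).integrableOn) (fun s hs _ => ?_)
    (hψm.mul stronglyMeasurable_condExp).aestronglyMeasurable
  calc ∫ ω in s, (ψ * μ[g|m]) ω ∂μ = ∫ ω in s, (μ[ψ * g|m]) ω ∂μ :=
        setIntegral_congr_ae (hm s hs) (hpull.mono fun _ h _ => h.symm)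
    _ = ∫ ω in s, (ψ * g) ω ∂μ := setIntegral_condExp hm hψg hs
    _ = ∫ ω in s, ψ ω ∂densMeasure μ g :=
        (setIntegral_densMeasure hg.1.aemeasurable hg0 ψ (hm s hs)).symm
    _ = ∫ ω in s, f ω ∂densMeasure μ g := setIntegral_condExp hm hf hs
    _ = ∫ ω in s, (f * g) ω ∂μ := setIntegral_densMeasure hg.1.aemeasurable hg0 f (hm s hs)

theorem condExp_densMeasure_ae_eq_div (hm : m ≤ m0) [IsFiniteMeasure μ] {d : Ω → ℝ}
    (hg : Integrable g μ) (hg0 : 0 ≤ᵐ[μ] g) (hgd : μ[g|m] =ᵐ[μ] d)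
    (hd : ∀ᵐ ω ∂μ, d ω ≠ 0) (hf : Integrable f (densMeasure μ g)) :
    (densMeasure μ g)[f|m] =ᵐ[μ] μ[f * g|m] / d := by
  filter_upwards [condExp_densMeasure_mul_condExp hm hg hg0 hf, hgd, hd] with ω hbayes hgdω hdω
  rw [Pi.div_apply, ← hbayes, Pi.mul_apply, hgdω, mul_div_cancel_right₀ _ hdω]

end ChangeOfMeasure

lemma exp_integral_collateral_add_basis {r0 r2 rc0 rc2 q : ℝ → ℝ} {a b : ℝ}
    (hq : ∀ s, q s = (r2 s - rc2 s) - (r0 s - rc0 s))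
    (h0 : IntervalIntegrable r0 volume a b) (h2 : IntervalIntegrable r2 volume a b)
    (hc0 : IntervalIntegrable rc0 volume a b) :
    Real.exp (∫ s in a..b, (rc2 s + q s))
      = Real.exp (∫ s in a..b, r2 s) * Real.exp (∫ s in a..b, rc0 s)
        / Real.exp (∫ s in a..b, r0 s) := by
  have hrate : (fun s => rc2 s + q s) = fun s => r2 s - r0 s + rc0 s := by
    funext s; rw [hq]; ring
  rw [← Real.exp_add, ← Real.exp_sub, hrate, intervalIntegral.integral_add (h2.sub h0) hc0,
    intervalIntegral.integral_sub h2 h0]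
  ring_nf

theorem foreign_zcb_domestic_collateral_under_foreign_measure_general
    {Ω : Type*} {m0 : MeasurableSpace Ω} (μ : Measure Ω) [IsProbabilityMeasure μ]
    (𝔾 : Filtration ℝ m0) (T : ℝ)
    (r0 r2 rc0 rc2 : ℝ → Ω → ℝ)
    (q20 : ℝ → Ω → ℝ)
    (hq20 : ∀ t ω, q20 t ω = (r2 t ω - rc2 t ω) - (r0 t ω - rc0 t ω))
    (B0 B2 Bc0 Bc20 : ℝ → Ω → ℝ)
    (hB0 : ∀ t ω, B0 t ω = Real.exp (∫ s in (0:ℝ)..t, r0 s ω))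
    (hB2 : ∀ t ω, B2 t ω = Real.exp (∫ s in (0:ℝ)..t, r2 s ω))
    (hBc0 : ∀ t ω, Bc0 t ω = Real.exp (∫ s in (0:ℝ)..t, rc0 s ω))
    (hBc20 : ∀ t ω, Bc20 t ω = Real.exp (∫ s in (0:ℝ)..t, (rc2 s ω + q20 s ω)))
    (hint : ∀ t ω, IntervalIntegrable (fun s => r0 s ω) volume 0 t ∧
        IntervalIntegrable (fun s => r2 s ω) volume 0 t ∧
        IntervalIntegrable (fun s => rc0 s ω) volume 0 t ∧
        IntervalIntegrable (fun s => rc2 s ω) volume 0 t)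
    (X : ℝ → Ω → ℝ) (hXpos : ∀ t ω, 0 < X t ω)
    (BZ : ℝ → ℝ → Ω → ℝ)                -- B^{k2,k0}(t,T)
    (hadX : ∀ t, StronglyMeasurable[𝔾 t] (X t))
    (hintX : Integrable (fun ω => X T ω / Bc0 T ω) μ)
    (hint20 : Integrable (fun ω => 1 / Bc20 T ω)
      (densMeasure μ fun ω => X T ω * B2 T ω / (B0 T ω * X 0 ω)))
    -- domestic-measure pricing formula for the k0-collateralized k2-ZCB
    (hdom : ∀ t, 0 ≤ t → t ≤ T →
      (fun ω => X t ω * BZ t T ω) =ᵐ[μ]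
        fun ω => Bc0 t ω * ((μ[fun ω' => X T ω' / Bc0 T ω' | 𝔾 t]) ω))
    -- 𝒳^{k0,k2} B^{k2}/B^{k0} is a true (ℚ^{k0},𝔾)-martingale defining the measure change
    (hmart : ∀ s t, 0 ≤ s → s ≤ t →
      μ[fun ω => X t ω * B2 t ω / (B0 t ω * X 0 ω) | 𝔾 s] =ᵐ[μ]
        fun ω => X s ω * B2 s ω / (B0 s ω * X 0 ω)) :
    ∀ t, 0 ≤ t → t ≤ T →
      (fun ω => BZ t T ω) =ᵐ[μ]
        fun ω => Bc20 t ω *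
          (((densMeasure μ fun ω' => X T ω' * B2 T ω' / (B0 T ω' * X 0 ω'))[fun ω' =>
              1 / Bc20 T ω' | 𝔾 t]) ω) := by
  intro t ht htT
  have hBc20_eq : ∀ u ω, Bc20 u ω = B2 u ω * Bc0 u ω / B0 u ω := fun u ω => by
    obtain ⟨h0, h2, hc0, -⟩ := hint u ω
    rw [hBc20, hB0, hB2, hBc0]
    exact exp_integral_collateral_add_basis (hq20 · ω) h0 h2 hc0
  set Z : ℝ → Ω → ℝ := fun u ω => X u ω * B2 u ω / (B0 u ω * X 0 ω)
  have hZpos : ∀ u ω, 0 < Z u ω := fun u ω => by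
    simp only [Z, hB0, hB2]
    exact div_pos (mul_pos (hXpos u ω) (Real.exp_pos _)) (mul_pos (Real.exp_pos _) (hXpos 0 ω))
  have hZ_nonneg : 0 ≤ᵐ[μ] Z T := .of_forall fun ω => (hZpos T ω).le
  have hZ_cond : μ[Z T|𝔾 t] =ᵐ[μ] Z t := hmart t T ht htT
  have hZ_int : Integrable (Z T) μ :=
    integrable_of_ae_pos_condExp (hZ_cond.mono fun ω h => h ▸ hZpos t ω)
  have hbayes := condExp_densMeasure_ae_eq_div (𝔾.le t) hZ_int hZ_nonneg hZ_cond
    (.of_forall fun ω => (hZpos t ω).ne') hint20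
  have hpayoff : (fun ω => 1 / Bc20 T ω) * Z T
      = (fun ω => (X 0 ω)⁻¹) * fun ω => X T ω / Bc0 T ω := by
    funext ω
    have := hXpos 0 ω
    simp only [Pi.mul_apply, Z, hBc20_eq, hB0, hB2, hBc0]
    field_simp
  have hpull : μ[(fun ω => 1 / Bc20 T ω) * Z T|𝔾 t]
      =ᵐ[μ] (fun ω => (X 0 ω)⁻¹) * μ[fun ω => X T ω / Bc0 T ω|𝔾 t] := by
    rw [hpayoff]
    refine condExp_mul_of_stronglyMeasurable_left
      ((hadX 0).mono (𝔾.mono ht)).measurable.inv.stronglyMeasurable ?_ hintX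
    exact hpayoff ▸
      integrable_mul_of_integrable_densMeasure hZ_int.1.aemeasurable hZ_nonneg hint20
  filter_upwards [hbayes, hpull, hdom t ht htT] with ω hb hp hd
  have hE : μ[fun ω => X T ω / Bc0 T ω|𝔾 t] ω = X t ω * BZ t T ω / Bc0 t ω := by
    rw [hd, mul_div_cancel_left₀ _ (hBc0 t ω ▸ Real.exp_ne_zero _)]
  have := hXpos 0 ω; have := hXpos t ω
  rw [hb, Pi.div_apply, hp, Pi.mul_apply, hE]
  simp only [Z, hBc20_eq, hB0, hB2, hBc0]
  field_simp

/-- The pricing formula for a foreign (`k2`-denominated) ZCB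
collateralized in currency `k0` under the domestic measure,
`𝒳^{k0,k2}_t B^{k2,k0}(t,T) = B^{c,k0}_t E^{ℚ^{k0}}[𝒳^{k0,k2}_T / B^{c,k0}_T | 𝒢_t]`,
transforms under the change to the foreign spot measure `ℚ^{k2}` with density
`(B^{k2}_T 𝒳^{k0,k2}_T / B^{k0}_T)·(B^{k0}_0/(B^{k2}_0 𝒳^{k0,k2}_0))` into
`B^{k2,k0}(t,T) = B^{c,k2,k0}_t E^{ℚ^{k2}}[1/B^{c,k2,k0}_T | 𝒢_t]`, where
`B^{c,k2,k0}_t = exp(∫_0^t (r^{c,k2}_s + q^{k2,k0}_s) ds)`. -/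
theorem foreign_zcb_domestic_collateral_under_foreign_measure
    {Ω : Type*} {m0 : MeasurableSpace Ω} (μ : Measure Ω) [IsProbabilityMeasure μ]
    (𝔾 : Filtration ℝ m0) (T : ℝ) (hT : 0 ≤ T)
    (r0 r2 rc0 rc2 : ℝ → Ω → ℝ)
    (q20 : ℝ → Ω → ℝ)
    (hq20 : ∀ t ω, q20 t ω = (r2 t ω - rc2 t ω) - (r0 t ω - rc0 t ω))
    (B0 B2 Bc0 Bc20 : ℝ → Ω → ℝ)
    (hB0 : ∀ t ω, B0 t ω = Real.exp (∫ s in (0:ℝ)..t, r0 s ω))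
    (hB2 : ∀ t ω, B2 t ω = Real.exp (∫ s in (0:ℝ)..t, r2 s ω))
    (hBc0 : ∀ t ω, Bc0 t ω = Real.exp (∫ s in (0:ℝ)..t, rc0 s ω))
    (hBc20 : ∀ t ω, Bc20 t ω = Real.exp (∫ s in (0:ℝ)..t, (rc2 s ω + q20 s ω)))
    (hint : ∀ t ω, IntervalIntegrable (fun s => r0 s ω) volume 0 t ∧
        IntervalIntegrable (fun s => r2 s ω) volume 0 t ∧
        IntervalIntegrable (fun s => rc0 s ω) volume 0 t ∧
        IntervalIntegrable (fun s => rc2 s ω) volume 0 t)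
    (X : ℝ → Ω → ℝ) (hXpos : ∀ t ω, 0 < X t ω)
    (BZ : ℝ → ℝ → Ω → ℝ)                -- B^{k2,k0}(t,T)
    (hadX : ∀ t, StronglyMeasurable[𝔾 t] (X t))
    (hadBZ : ∀ t τ, StronglyMeasurable[𝔾 t] fun ω => BZ t τ ω)
    (hintX : Integrable (fun ω => X T ω / Bc0 T ω) μ)
    (hint20 : Integrable (fun ω => 1 / Bc20 T ω)
      (densMeasure μ fun ω => X T ω * B2 T ω / (B0 T ω * X 0 ω)))
    -- domestic-measure pricing formula for the k0-collateralized k2-ZCB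
    (hdom : ∀ t, 0 ≤ t → t ≤ T →
      (fun ω => X t ω * BZ t T ω) =ᵐ[μ]
        fun ω => Bc0 t ω * ((μ[fun ω' => X T ω' / Bc0 T ω' | 𝔾 t]) ω))
    -- 𝒳^{k0,k2} B^{k2}/B^{k0} is a true (ℚ^{k0},𝔾)-martingale defining the measure change
    (hmart : ∀ s t, 0 ≤ s → s ≤ t →
      μ[fun ω => X t ω * B2 t ω / (B0 t ω * X 0 ω) | 𝔾 s] =ᵐ[μ]
        fun ω => X s ω * B2 s ω / (B0 s ω * X 0 ω)) :
    ∀ t, 0 ≤ t → t ≤ T →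
      (fun ω => BZ t T ω) =ᵐ[μ]
        fun ω => Bc20 t ω *
          (((densMeasure μ fun ω' => X T ω' * B2 T ω' / (B0 T ω' * X 0 ω'))[fun ω' =>
              1 / Bc20 T ω' | 𝔾 t]) ω) :=
  foreign_zcb_domestic_collateral_under_foreign_measure_general μ 𝔾 T r0 r2 rc0 rc2 q20 hq20 B0 B2
    Bc0 Bc20 hB0 hB2 hBc0 hBc20 hint X hXpos BZ hadX hintX hint20 hdom hmart
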